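/- Proposition 1 (inner approximation of the terminal set, T̂ ⊆ T) for conjunctions of per-instant safety constraints: feedback robustness against magnified disturbances implies open-loop robustness against the true disturbances. Suppose that for every u ∈ ℝ^m the map x ↦ f(x, u) is Lipschitz with constant L ≥ 0, let r ≥ 0, and let H₀, …, H_T ⊆ ℝ^n. Let x₀ ∈ ℝ^n and let σ be a strategy on {0, …, T−1} such that for every disturbance sequence with w_j ∈ closedBall(0, r · ∑_{i=0}^{j} L^i) for each j, the trajectory obtained by playing σ from x₀ satisfies x_j ∈ H_j for every j ∈ {0, …, T}. Then the open-loop inputs u_j := σ_j(0, …, 0) (the inputs σ produces along the all-zero disturbance history) satisfy: for every disturbance sequence with w_j ∈ closedBall(0, r) for each j, the disturbed trajectory from x₀ under u₀, …, u_{T−1} satisfies x_j ∈ H_j for every j ∈ {0, …, T}. -/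
import Mathlib




/-- The state space `ℝ^n`. -/
abbrev Vec (n : ℕ) := EuclideanSpace ℝ (Fin n)

/-- Auxiliary: trajectory under a strategy, `i` steps after the starting instant `k`. -/
def strajAux {n m : ℕ} (f : Vec n → Vec m → Vec n) (k : ℕ) (x : Vec n)
    (σ : ℕ → (ℕ → Vec n) → Vec m) (w : ℕ → Vec n) : ℕ → Vec n
  | 0 => x
  | i + 1 => f (strajAux f k x σ w i) (σ (k + i) w) + w (k + i)

/-- Trajectory obtained by playing strategy `σ` from state `x` at instant `k` against
the disturbance sequence `w`: `x_k = x`, `x_{j+1} = f (x_j, σ_j(w)) + w_j`. -/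
def straj {n m : ℕ} (f : Vec n → Vec m → Vec n) (k : ℕ) (x : Vec n)
    (σ : ℕ → (ℕ → Vec n) → Vec m) (w : ℕ → Vec n) (j : ℕ) : Vec n :=
  strajAux f k x σ w (j - k)

/-- A strategy starting at instant `k` is causal: the input chosen at time `j` depends
only on the disturbance history `w_k, …, w_{j-1}`. -/
def Causal {n m : ℕ} (k : ℕ) (σ : ℕ → (ℕ → Vec n) → Vec m) : Prop :=
  ∀ (j : ℕ) (w w' : ℕ → Vec n), (∀ i, k ≤ i → i < j → w i = w' i) → σ j w = σ j w'

/-- Auxiliary: disturbed trajectory, `i` steps after the starting instant `k`. -/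
def dtrajAux {n m : ℕ} (f : Vec n → Vec m → Vec n) (k : ℕ) (x : Vec n)
    (u : ℕ → Vec m) (w : ℕ → Vec n) : ℕ → Vec n
  | 0 => x
  | i + 1 => f (dtrajAux f k x u w i) (u (k + i)) + w (k + i)

/-- Disturbed trajectory: `dtraj f k x u w j` is the state at time `j ≥ k`, where the
state at time `k` is `x` and `x_{j+1} = f (x_j, u_j) + w_j`. -/
def dtraj {n m : ℕ} (f : Vec n → Vec m → Vec n) (k : ℕ) (x : Vec n)
    (u : ℕ → Vec m) (w : ℕ → Vec n) (j : ℕ) : Vec n :=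
  dtrajAux f k x u w (j - k)

/-- Proposition 1 (inner approximation of the terminal set) for conjunctions of
per-instant safety constraints: if a (causal) strategy `σ` robustly keeps the
trajectory in the sets `H_j` against the magnified disturbances
`closedBall(0, r·∑_{i=0}^{j} Lⁱ)`, then the open-loop inputs `u_j = σ_j(0,…,0)`
keep the disturbed trajectory in the sets `H_j` against the true disturbances
`closedBall(0, r)`. -/
theorem terminal_set_inner_approximation {n m : ℕ}
    (f : Vec n → Vec m → Vec n) (U : Set (Vec m)) (L : ℝ) (hL : 0 ≤ L)
    (hf : ∀ (u : Vec m) (x x' : Vec n), ‖f x' u - f x u‖ ≤ L * ‖x' - x‖)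
    (r : ℝ) (hr : 0 ≤ r) (T : ℕ) (H : ℕ → Set (Vec n)) (x0 : Vec n)
    (σ : ℕ → (ℕ → Vec n) → Vec m)
    (hσU : ∀ j w, j < T → σ j w ∈ U) (hσc : Causal 0 σ)
    (hrob : ∀ w : ℕ → Vec n,
      (∀ j, j < T →
        w j ∈ Metric.closedBall (0 : Vec n) (r * ∑ i ∈ Finset.range (j + 1), L ^ i)) →
      ∀ j, j ≤ T → straj f 0 x0 σ w j ∈ H j) :
    ∀ w : ℕ → Vec n, (∀ j, j < T → w j ∈ Metric.closedBall (0 : Vec n) r) →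
      ∀ j, j ≤ T → dtraj f 0 x0 (fun j => σ j (fun _ => 0)) w j ∈ H j := by

  intro w hw J hJ
  set u : ℕ → Vec m := fun j => σ j (fun _ => 0) with hu
  have hsum : ∀ j : ℕ, 0 ≤ r * ∑ i ∈ Finset.range j, L ^ i := by
    intro j
    have : (0:ℝ) ≤ ∑ i ∈ Finset.range j, L ^ i :=
      Finset.sum_nonneg fun i _ => pow_nonneg hL i
    positivity
  -- deviation between disturbed and nominal open-loop trajectories
  have hdev : ∀ j, j ≤ T →
      ‖dtrajAux f 0 x0 u w j - dtrajAux f 0 x0 u (fun _ => 0) j‖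
        ≤ r * ∑ i ∈ Finset.range j, L ^ i := by
    intro j hj
    induction j with
    | zero => simp [dtrajAux]
    | succ j ih =>
      have hj' : j ≤ T := Nat.le_of_succ_le hj
      have ih := ih hj'
      have hwj : ‖w j‖ ≤ r := by
        have := hw j (Nat.lt_of_succ_le hj)
        simpa [Metric.mem_closedBall] using this
      have hrw : dtrajAux f 0 x0 u w (j+1) - dtrajAux f 0 x0 u (fun _ => 0) (j+1)
          = (f (dtrajAux f 0 x0 u w j) (u (0+j))
              - f (dtrajAux f 0 x0 u (fun _ => 0) j) (u (0+j))) + w (0+j) := by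
        show (f (dtrajAux f 0 x0 u w j) (u (0+j)) + w (0+j))
            - (f (dtrajAux f 0 x0 u (fun _ => 0) j) (u (0+j)) + 0) = _
        abel
      calc ‖dtrajAux f 0 x0 u w (j+1) - dtrajAux f 0 x0 u (fun _ => 0) (j+1)‖
          ≤ ‖f (dtrajAux f 0 x0 u w j) (u (0+j))
              - f (dtrajAux f 0 x0 u (fun _ => 0) j) (u (0+j))‖ + ‖w (0+j)‖ := by
            rw [hrw]; exact norm_add_le _ _
        _ ≤ L * ‖dtrajAux f 0 x0 u w j - dtrajAux f 0 x0 u (fun _ => 0) j‖ + r := by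
            gcongr
            · exact hf _ _ _
            · simpa using hwj
        _ ≤ L * (r * ∑ i ∈ Finset.range j, L ^ i) + r := by gcongr
        _ = r * ∑ i ∈ Finset.range (j+1), L ^ i := by
            rw [geom_sum_succ]; ring
  rcases Nat.eq_zero_or_pos J with hJ0 | hJpos
  · subst hJ0
    have h := hrob (fun _ => 0) (fun j _ => by
      simpa [Metric.mem_closedBall] using hsum (j+1)) 0 (Nat.zero_le _)
    simpa [straj, dtraj, strajAux, dtrajAux] using h
  obtain ⟨K, rfl⟩ : ∃ K, J = K + 1 := ⟨J - 1, (Nat.succ_pred_eq_of_pos hJpos).symm⟩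
  set wh : ℕ → Vec n := fun i =>
    if i = K then dtrajAux f 0 x0 u w (K+1) - dtrajAux f 0 x0 u (fun _ => 0) (K+1)
    else 0 with hwh
  -- the strategy against wh follows the nominal trajectory up to time K
  have hσeq : ∀ j, j ≤ K → σ j wh = u j := by
    intro j hjK
    apply hσc
    intro i _ hij
    have : i ≠ K := by omega
    simp [hwh, this]
  have hnom : ∀ j, j ≤ K →
      strajAux f 0 x0 σ wh j = dtrajAux f 0 x0 u (fun _ => 0) j := by
    intro j hjK
    induction j with
    | zero => rfl
    | succ j ih =>
      have hj' : j ≤ K := Nat.le_of_succ_le hjK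
      have ih := ih hj'
      show f (strajAux f 0 x0 σ wh j) (σ (0+j) wh) + wh (0+j)
          = f (dtrajAux f 0 x0 u (fun _ => 0) j) (u (0+j)) + 0
      have hne : j ≠ K := by omega
      rw [ih, hwh]
      simp only [Nat.zero_add, if_neg hne]
      rw [show σ j wh = u j from hσeq j (by omega)]
  have hKstep : strajAux f 0 x0 σ wh (K+1) = dtrajAux f 0 x0 u w (K+1) := by
    show f (strajAux f 0 x0 σ wh K) (σ (0+K) wh) + wh (0+K) = _
    rw [hnom K le_rfl]
    rw [show σ (0+K) wh = u (0+K) from hσeq (0+K) (by omega)]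
    have : wh (0+K) = dtrajAux f 0 x0 u w (K+1) - dtrajAux f 0 x0 u (fun _ => 0) (K+1) := by
      simp [hwh]
    rw [this]
    have hnom1 : dtrajAux f 0 x0 u (fun _ => 0) (K+1)
        = f (dtrajAux f 0 x0 u (fun _ => 0) K) (u (0+K)) + 0 := rfl
    rw [hnom1]
    abel
  have hadm : ∀ j, j < T →
      wh j ∈ Metric.closedBall (0 : Vec n) (r * ∑ i ∈ Finset.range (j + 1), L ^ i) := by
    intro j hjT
    rcases eq_or_ne j K with rfl | hne
    · simp only [hwh, if_pos rfl]
      simpa [Metric.mem_closedBall] using hdev (j+1) (by omega)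
    · simp only [hwh, if_neg hne]
      simpa [Metric.mem_closedBall] using hsum (j+1)
  have h := hrob wh hadm (K+1) hJ
  have : straj f 0 x0 σ wh (K+1) = dtraj f 0 x0 u w (K+1) := by
    simpa [straj, dtraj] using hKstep
  rw [this] at h
  exact h
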